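/- arXiv:2012.09794 — 6 statements merged into one kernel-verified Lean document; each statement's English description precedes it below -/
import Mathlib

section
/- If a finite graph G is k-edge stable, then G contains no full special tree of height 2^{k+2} − 2. -/
open scoped Classical
open Finset

/-- `A` is `ε`-good in `G`: every vertex `b` partitions `A` with one side of size `< ε|A|`. -/
def Good {V : Type*} (G : SimpleGraph V) (ε : ℝ) (A : Finset V) : Prop :=
  ∀ b : V, ((A.filter fun a => G.Adj b a).card : ℝ) < ε * A.card ∨
    ((A.filter fun a => ¬ G.Adj b a).card : ℝ) < ε * A.card

/-- The majority truth value `t(a,B)` equals `1` : the non-neighbors of `a` in `B` are a minority. -/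
def Maj1 {V : Type*} (G : SimpleGraph V) (ε : ℝ) (a : V) (B : Finset V) : Prop :=
  ((B.filter fun b => ¬ G.Adj a b).card : ℝ) < ε * B.card

/-- `A` is `ε`-excellent: for every nonempty `ε`-good `B`, the majority values of elements
of `A` toward `B` agree off a set of size `< ε|A|`. -/
def Excellent {V : Type*} (G : SimpleGraph V) (ε : ℝ) (A : Finset V) : Prop :=
  ∀ B : Finset V, B.Nonempty → Good G ε B →
    ((A.filter fun a => Maj1 G ε a B).card : ℝ) < ε * A.card ∨
    ((A.filter fun a => ¬ Maj1 G ε a B).card : ℝ) < ε * A.card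

/-- `G` is `k`-edge stable: no half-graph of length `k` on `2k` distinct vertices. -/
def EdgeStable {V : Type*} (G : SimpleGraph V) (k : ℕ) : Prop :=
  ¬ ∃ a b : Fin k → V, Function.Injective (Sum.elim a b) ∧
      ∀ i j, G.Adj (a i) (b j) ↔ i < j

/-- `G` contains a full special tree of height `n`. -/
def SpecialTree {V : Type*} (G : SimpleGraph V) (n : ℕ) : Prop :=
  ∃ (b : (m : Fin n) → (Fin m → Bool) → V) (a : (Fin n → Bool) → V),
    ∀ (η : Fin n → Bool) (m : Fin n),
      G.Adj (a η) (b m fun i => η (Fin.castLE m.isLt.le i)) ↔ η m = true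

/-- Edge density between finite vertex sets. -/
noncomputable def dens {V : Type*} (G : SimpleGraph V) (A B : Finset V) : ℝ :=
  (((A ×ˢ B).filter fun p => G.Adj p.1 p.2).card : ℝ) / ((A.card : ℝ) * B.card)

/-- `(A,B)` is `ε`-regular. -/
noncomputable def Regular {V : Type*} (G : SimpleGraph V) (ε : ℝ) (A B : Finset V) : Prop :=
  ∀ A' ⊆ A, ∀ B' ⊆ B, ε * A.card ≤ (A'.card : ℝ) → ε * B.card ≤ (B'.card : ℝ) →
    |dens G A' B' - dens G A B| < ε

/-- `(A,B)` is `ε`-uniform with truth value `t`. -/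
def Uniform {V : Type*} (G : SimpleGraph V) (ε : ℝ) (A B : Finset V) (t : Bool) : Prop :=
  ((A.filter fun a =>
      ¬ (((B.filter fun b => ¬ (G.Adj a b ↔ t = true)).card : ℝ) < ε * B.card)).card : ℝ)
    < ε * A.card

/-!
Walk down the tree and build a half graph from the outside in. The root `w` becomes a column, and
we pass to the branch whose leaves all relate to `w` in the same way; a leaf `x` of that branch
becomes a row. By a Ramsey argument for trees, half of the remaining height still carries a tree
all of whose nodes relate to `x` in the same way. According to these two relations, `x` and `w`
are put at the front or at the back of the half graph found recursively in that subtree, which has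
to be strict (`i < j`) or weak (`i ≤ j`) accordingly. Three more levels per step keep rows
distinct from columns, so a tree of height `2 ^ (s + 2) - 4` carries a half graph of length `s`.
-/

section

variable {V : Type*} {G : SimpleGraph V}

/-- The leaves of the branch `c` below the root `r` are those `v` with `G.Adj v r ↔ c`; only the
sets `L` and `N` from which leaves and nodes are taken are recorded. -/
inductive SpecialTreeIn (G : SimpleGraph V) : ℕ → Set V → Set V → Prop
  | leaf {L N : Set V} : L.Nonempty → SpecialTreeIn G 0 L N
  | node {n : ℕ} {L N : Set V} (r : V) : r ∈ N →
      (∀ c : Bool, SpecialTreeIn G n {v ∈ L | G.Adj v r ↔ c} N) → SpecialTreeIn G (n + 1) L N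

namespace SpecialTreeIn

variable {n : ℕ} {L N : Set V}

theorem exists_root (hT : SpecialTreeIn G (n + 1) L N) :
    ∃ r ∈ N, ∀ c : Bool, SpecialTreeIn G n {v ∈ L | G.Adj v r ↔ c} N := by
  cases hT with
  | node r hr hbranch => exact ⟨r, hr, hbranch⟩

theorem leaves_nonempty (hT : SpecialTreeIn G n L N) : L.Nonempty := by
  induction hT with
  | leaf hL => exact hL
  | node r _ _ ih => exact (ih true).mono (Set.sep_subset _ _)

theorem mono {L' N' : Set V} (hT : SpecialTreeIn G n L N) (hL : L ⊆ L') (hN : N ⊆ N') :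
    SpecialTreeIn G n L' N' := by
  induction hT generalizing L' with
  | leaf hL₀ => exact .leaf (hL₀.mono hL)
  | node r hr _ ih => exact .node r (hN hr) fun c => ih c (fun v hv => ⟨hL hv.1, hv.2⟩) hN

theorem of_le {m : ℕ} (hT : SpecialTreeIn G n L N) (hmn : m ≤ n) : SpecialTreeIn G m L N := by
  induction hT generalizing m with
  | leaf hL => rw [Nat.le_zero.mp hmn]; exact .leaf hL
  | @node n L N r hr hbranch ih =>
    cases m with
    | zero => exact .leaf (SpecialTreeIn.node r hr hbranch).leaves_nonempty
    | succ m => exact .node r hr fun c => ih c (by omega)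

theorem ramsey (P : V → Prop) (hT : SpecialTreeIn G n L N) (a b : ℕ) (hab : a + b = n) :
    SpecialTreeIn G a L {v ∈ N | ¬P v} ∨ SpecialTreeIn G b L {v ∈ N | P v} := by
  induction hT generalizing a b with
  | @leaf L N hL =>
    obtain rfl : a = 0 := by omega
    exact .inl (.leaf hL)
  | @node n L N r hr hbranch ih =>
    have hL := (SpecialTreeIn.node r hr hbranch).leaves_nonempty
    obtain rfl | ⟨a, rfl⟩ : a = 0 ∨ ∃ a', a = a' + 1 := by cases a <;> simp
    · exact .inl (.leaf hL)
    obtain rfl | ⟨b, rfl⟩ : b = 0 ∨ ∃ b', b = b' + 1 := by cases b <;> simp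
    · exact .inr (.leaf hL)
    by_cases hPr : P r
    · by_cases hsmall : ∃ c : Bool, SpecialTreeIn G (a + 1) {v ∈ L | G.Adj v r ↔ c} {v ∈ N | ¬P v}
      · obtain ⟨c, hc⟩ := hsmall
        exact .inl (hc.mono (Set.sep_subset _ _) subset_rfl)
      · push Not at hsmall
        exact .inr (.node r ⟨hr, hPr⟩ fun c => (ih c (a + 1) b (by omega)).resolve_left (hsmall c))
    · by_cases hsmall : ∃ c : Bool, SpecialTreeIn G (b + 1) {v ∈ L | G.Adj v r ↔ c} {v ∈ N | P v}
      · obtain ⟨c, hc⟩ := hsmall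
        exact .inr (hc.mono (Set.sep_subset _ _) subset_rfl)
      · push Not at hsmall
        exact .inl (.node r ⟨hr, hPr⟩ fun c => (ih c a (b + 1) (by omega)).resolve_right (hsmall c))

theorem without_leaf (hT : SpecialTreeIn G (n + 1) L N) (v : V) :
    SpecialTreeIn G n (L \ {v}) N := by
  obtain ⟨r, -, hbranch⟩ := hT.exists_root
  refine (hbranch (decide ¬G.Adj v r)).mono (fun u hu => ⟨hu.1, ?_⟩) subset_rfl
  rintro rfl
  simpa using hu.2

theorem not_two_singleton (x : V) : ¬SpecialTreeIn G 2 L {x} := by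
  intro hT
  obtain ⟨r, rfl, hbranch⟩ := hT.exists_root
  obtain ⟨r', rfl, hbranch'⟩ := (hbranch true).exists_root
  obtain ⟨v, ⟨-, hv⟩, hv'⟩ := (hbranch' false).leaves_nonempty
  simp_all

theorem without_node (hT : SpecialTreeIn G (n + 2) L N) (x : V) :
    SpecialTreeIn G n L (N \ {x}) := by
  have hsmall := (hT.ramsey (· = x) n 2 rfl).resolve_right fun h =>
    not_two_singleton x (h.mono subset_rfl fun v hv => hv.2)
  exact hsmall.mono subset_rfl fun v hv => hv

end SpecialTreeIn

theorem SpecialTree.specialTreeIn_univ {n : ℕ}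
    (hT : SpecialTree G n) : SpecialTreeIn G n Set.univ Set.univ := by
  obtain ⟨b, a, hab⟩ := hT
  -- the leaves below the node at depth `m` reached along `ρ`
  suffices key : ∀ d m, m + d = n → ∀ ρ : ℕ → Bool,
      SpecialTreeIn G d (a '' {η | ∀ i : Fin n, (i : ℕ) < m → η i = ρ i}) Set.univ from
    (key n 0 (zero_add n) fun _ => false).mono (Set.subset_univ _) subset_rfl
  intro d
  induction d with
  | zero =>
    intro m _ ρ
    exact .leaf ⟨_, fun i => ρ i, fun _ _ => rfl, rfl⟩
  | succ d ih =>
    intro m hm ρ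
    refine .node (b ⟨m, by omega⟩ fun i => ρ i) trivial fun c =>
      (ih (m + 1) (by omega) (Function.update ρ m c)).mono ?_ subset_rfl
    rintro _ ⟨η, hη, rfl⟩
    have hprefix : ∀ i : Fin n, (i : ℕ) < m → η i = ρ i := fun i hi => by
      rw [hη i (by omega), Function.update_of_ne (by omega)]
    refine ⟨⟨η, hprefix, rfl⟩, ?_⟩
    have hnode :
        (b ⟨m, by omega⟩ fun i => η (Fin.castLE (by omega) i)) = b ⟨m, by omega⟩ fun i => ρ i :=
      congrArg _ (funext fun i => hprefix _ i.isLt)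
    rw [← hnode, hab η ⟨m, by omega⟩, hη ⟨m, by omega⟩ m.lt_succ_self, Function.update_self]

variable {s : ℕ}

structure IsLadder (G : SimpleGraph V) (δ : Bool) (a b : Fin s → V) : Prop where
  adj_iff : ∀ i j, G.Adj (a i) (b j) ↔ (i : ℕ) < j + δ.toNat
  ne : ∀ i j, a i ≠ b j

theorem IsLadder.extend {δ t : Bool} {a b : Fin s → V} (H : IsLadder G (!t) a b) {x w : V}
    (hxb : ∀ j, (G.Adj x (b j) ↔ t) ∧ x ≠ b j) (haw : ∀ i, (G.Adj (a i) w ↔ δ) ∧ a i ≠ w)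
    (hxw : (G.Adj x w ↔ δ) ∧ x ≠ w) :
    ∃ a' b' : Fin (s + 1) → V, IsLadder G δ a' b' ∧
      Set.range a' = insert x (Set.range a) ∧ Set.range b' = insert w (Set.range b) := by
  have hadj := H.adj_iff
  have hne := H.ne
  cases t <;> cases δ
  · refine ⟨Fin.snoc a x, Fin.cons w b, ⟨fun i j => ?_, fun i j => ?_⟩, by simp, by simp⟩ <;>
      induction i using Fin.lastCases <;> induction j using Fin.cases <;> simp_all
  · refine ⟨Fin.snoc a x, Fin.snoc b w, ⟨fun i j => ?_, fun i j => ?_⟩, by simp, by simp⟩ <;>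
      induction i using Fin.lastCases <;> induction j using Fin.lastCases <;> simp_all
  · refine ⟨Fin.cons x a, Fin.cons w b, ⟨fun i j => ?_, fun i j => ?_⟩, by simp, by simp⟩ <;>
      induction i using Fin.cases <;> induction j using Fin.cases <;> simp_all
  · refine ⟨Fin.cons x a, Fin.snoc b w, ⟨fun i j => ?_, fun i j => ?_⟩, by simp, by simp⟩ <;>
      induction i using Fin.cases <;> induction j using Fin.lastCases <;> simp_all

theorem IsLadder.injective_sumElim {a b : Fin s → V} (H : IsLadder G false a b) :
    Function.Injective (Sum.elim a b) := by
  have hrow : ∀ i i', a i = a i' → ¬i < i' := fun i i' h hlt => by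
    have := (H.adj_iff i i').2 (by simpa using hlt)
    simp [h, H.adj_iff] at this
  have hcol : ∀ j j', b j = b j' → ¬j < j' := fun j j' h hlt => by
    have := (H.adj_iff j j').2 (by simpa using hlt)
    simp [← h, H.adj_iff] at this
  rintro (i | j) (i' | j') h
  · exact congrArg _ (le_antisymm (not_lt.1 (hrow i' i h.symm)) (not_lt.1 (hrow i i' h)))
  · exact absurd h (H.ne i j')
  · exact absurd h.symm (H.ne i' j)
  · exact congrArg _ (le_antisymm (not_lt.1 (hcol j' j h.symm)) (not_lt.1 (hcol j j' h)))

theorem SpecialTreeIn.exists_ladder (δ : Bool) (s : ℕ) {L N : Set V}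
    (hT : SpecialTreeIn G (2 ^ (s + 2) - 4) L N) :
    ∃ a b : Fin s → V, IsLadder G δ a b ∧ Set.range a ⊆ L ∧ Set.range b ⊆ N := by
  induction s generalizing δ L N with
  | zero => exact ⟨Fin.elim0, Fin.elim0, ⟨fun i => i.elim0, fun i => i.elim0⟩, by simp, by simp⟩
  | succ s ih =>
    set h := 2 ^ (s + 2) - 4
    have hheight : 2 ^ (s + 1 + 2) - 4 = h + h + 3 + 1 := by
      have : 2 ^ 2 ≤ 2 ^ (s + 2) := Nat.pow_le_pow_right (by norm_num) (by omega)
      rw [pow_succ]; omega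
    rw [hheight] at hT
    obtain ⟨w, hw, hbranch⟩ := hT.exists_root
    set L' := {v ∈ L | G.Adj v w ↔ δ} \ {w}
    have hT₁ : SpecialTreeIn G (h + h + 2) L' N := (hbranch δ).without_leaf w
    obtain ⟨x, hx⟩ := hT₁.leaves_nonempty
    obtain ⟨t, hT₂⟩ : ∃ t : Bool, SpecialTreeIn G h L' {v ∈ N \ {x} | G.Adj x v ↔ t} := by
      rcases (hT₁.without_node x).ramsey (G.Adj x) h h rfl with hS | hS
      · exact ⟨false, by simpa using hS⟩
      · exact ⟨true, by simpa using hS⟩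
    obtain ⟨a, b, hab, ha, hb⟩ := ih (!t) hT₂
    obtain ⟨a', b', hab', ha', hb'⟩ := hab.extend (δ := δ)
      (fun j => ⟨(hb ⟨j, rfl⟩).2, Ne.symm (hb ⟨j, rfl⟩).1.2⟩)
      (fun i => ⟨(ha ⟨i, rfl⟩).1.2, (ha ⟨i, rfl⟩).2⟩) ⟨hx.1.2, hx.2⟩
    refine ⟨a', b', hab', ?_, ?_⟩
    · rw [ha']
      exact Set.insert_subset hx.1.1 (ha.trans fun v hv => hv.1.1)
    · rw [hb']
      exact Set.insert_subset hw (hb.trans fun v hv => hv.1.1)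

end

theorem no_special_tree_of_edgeStable_general {V : Type*} (G : SimpleGraph V) (k : ℕ)
    (h : EdgeStable G k) : ¬ SpecialTree G (2 ^ (k + 2) - 2) := by
  intro hT
  obtain ⟨a, b, hab, -, -⟩ :=
    (hT.specialTreeIn_univ.of_le (Nat.sub_le_sub_left (by norm_num) _)).exists_ladder false k
  exact h ⟨a, b, hab.injective_sumElim, fun i j => by rw [hab.adj_iff, Fin.lt_def]; simp⟩

/-- a k-edge stable finite graph has no full special tree of height 2^(k+2) - 2. -/
theorem no_special_tree_of_edgeStable {V : Type*} [Fintype V] (G : SimpleGraph V) (k : ℕ)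
    (h : EdgeStable G k) : ¬ SpecialTree G (2 ^ (k + 2) - 2) :=
  no_special_tree_of_edgeStable_general G k h
end

section
/- If a graph G contains no full special tree of height n, then G is 2^{n+1}-edge stable. -/
open scoped Classical
open Finset

/-!
Index the leaf `η` of a tree of height `n` by the binary number with digits
`¬η 0, …, ¬η (n-1)`, most significant first, and the node `ρ` at depth `m` by
`(2·[ρ] + 1)·2^(n-1-m)`, the middle of the block of indices of the leaves through `ρ`: the
leaves through `ρ⌢1` lie below it and those through `ρ⌢0` above it. Reading a half graph of
length `2^n` through these indices therefore gives a full special tree of height `n`.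
-/

namespace SpecialTree

def binIndex (η : ℕ → Bool) : ℕ → ℕ
  | 0 => 0
  | n + 1 => 2 * binIndex η n + (!η n).toNat

def nodeIndex (η : ℕ → Bool) (m k : ℕ) : ℕ :=
  (2 * binIndex η m + 1) * 2 ^ k

def extendFalse {m : ℕ} (ρ : Fin m → Bool) (i : ℕ) : Bool :=
  if h : i < m then ρ ⟨i, h⟩ else false

variable (η : ℕ → Bool)

theorem binIndex_lt_two_pow (n : ℕ) : binIndex η n < 2 ^ n := by
  induction n with
  | zero => simp [binIndex]
  | succ n ih =>
    have : (!η n).toNat ≤ 1 := Bool.toNat_le _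
    rw [binIndex, pow_succ]
    omega

theorem binIndex_congr {η' : ℕ → Bool} {n : ℕ} (h : ∀ i < n, η i = η' i) :
    binIndex η n = binIndex η' n := by
  induction n with
  | zero => rfl
  | succ n ih =>
    rw [binIndex, binIndex, ih fun i hi => h i (by omega), h n (by omega)]

theorem binIndex_add_div_two_pow (m k : ℕ) : binIndex η (m + k) / 2 ^ k = binIndex η m := by
  induction k with
  | zero => simp
  | succ k ih =>
    have : (!η (m + k)).toNat ≤ 1 := Bool.toNat_le _
    rw [← add_assoc, binIndex, pow_succ', ← Nat.div_div_eq_div_mul, ← ih]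
    congr 1
    omega

theorem nodeIndex_lt_two_pow (m k : ℕ) : nodeIndex η m k < 2 ^ (m + 1 + k) := by
  have := binIndex_lt_two_pow η m
  rw [nodeIndex, pow_add, pow_succ]
  gcongr
  omega

theorem binIndex_lt_nodeIndex_iff (m k : ℕ) :
    binIndex η (m + 1 + k) < nodeIndex η m k ↔ η m = true := by
  rw [nodeIndex, ← Nat.div_lt_iff_lt_mul (by positivity), binIndex_add_div_two_pow, binIndex]
  cases η m <;> simp

end SpecialTree

open SpecialTree in
theorem specialTree_of_halfGraph {V : Type*} {G : SimpleGraph V} {n k : ℕ} (hk : 2 ^ n ≤ k)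
    (a b : Fin k → V) (hab : ∀ i j, G.Adj (a i) (b j) ↔ i < j) : SpecialTree G n := by
  have hsplit (m : Fin n) : m + 1 + (n - m - 1) = n := by omega
  refine ⟨fun m ρ => b ⟨nodeIndex (extendFalse ρ) m (n - m - 1), ?_⟩,
    fun η => a ⟨binIndex (extendFalse η) n, ?_⟩, fun η m => ?_⟩
  · exact (hsplit m ▸ nodeIndex_lt_two_pow _ _ _).trans_le hk
  · exact (binIndex_lt_two_pow _ n).trans_le hk
  · have hprefix : binIndex (extendFalse fun i : Fin m => η (Fin.castLE m.isLt.le i)) m =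
        binIndex (extendFalse η) m :=
      binIndex_congr _ fun i hi => by simp [extendFalse, hi, hi.trans m.isLt]
    have key := binIndex_lt_nodeIndex_iff (extendFalse η) m (n - m - 1)
    rw [hsplit m] at key
    rw [hab, Fin.mk_lt_mk, nodeIndex, hprefix, ← nodeIndex, key]
    simp [extendFalse]

/-- if G has no full special tree of height n, then G is 2^(n+1)-edge stable. -/
theorem edgeStable_of_no_special_tree {V : Type*} (G : SimpleGraph V) (n : ℕ)
    (h : ¬ SpecialTree G n) : EdgeStable G (2 ^ (n + 1)) := by
  rintro ⟨a, b, -, hab⟩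
  exact h (specialTree_of_halfGraph (Nat.pow_le_pow_right two_pos n.le_succ) a b hab)
end

section
/- Let G be a finite graph with no full special tree of height t, and let 0 < ε < 1/2^t. Then for every subset A of G with |A| ≥ 1/ε^t, there exists an ε-excellent subset A′ ⊆ A with |A′| ≥ ε^{t−1}|A|. -/
open scoped Classical
open Finset

/-!
If no large subset of `A` were `ε`-excellent, every large `C ⊆ A` would be split by a nonempty
`ε`-good `B` into two parts of size `≥ ε|C|` with opposite majority values on `B`. Iterating
`t` times gives a binary tree of subsets of `A` whose leaves have size `≥ ε^t|A| ≥ 1`. Pick a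
vertex in each leaf; going up, each splitting set `B` contains a vertex agreeing with the
majority values of all `≤ 2^t` chosen leaves below it, since each of them disagrees with its
majority on fewer than `ε|B|` vertices and `2^t ε < 1`. These vertices form a full special
tree of height `t`.
-/

section SpecialTree

variable {V : Type*} (G : SimpleGraph V)

def IsSpecialTree {n : ℕ} (b : (m : Fin n) → (Fin m → Bool) → V) (a : (Fin n → Bool) → V) :
    Prop :=
  ∀ (η : Fin n → Bool) (m : Fin n),
    G.Adj (a η) (b m fun i => η (Fin.castLE m.isLt.le i)) ↔ η m = true

variable {n : ℕ}

/- Hanging the trees indexed by `ℓ : Bool` below a new root `r`: the branch `η` enters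
subtree `η 0` and continues there along `Fin.tail η`. -/
def glueLeaves (a : Bool → (Fin n → Bool) → V) : (Fin (n + 1) → Bool) → V :=
  fun η => a (η 0) (Fin.tail η)

def glueNodes (r : V) (b : Bool → (m : Fin n) → (Fin m → Bool) → V) :
    (m : Fin (n + 1)) → (Fin m → Bool) → V :=
  Fin.cases (fun _ => r) fun m (ρ : Fin (m + 1) → Bool) => b (ρ 0) m (Fin.tail ρ)

variable {G}

theorem IsSpecialTree.glue {r : V} {b : Bool → (m : Fin n) → (Fin m → Bool) → V}
    {a : Bool → (Fin n → Bool) → V} (h : ∀ ℓ, IsSpecialTree G (b ℓ) (a ℓ))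
    (hr : ∀ η, G.Adj (glueLeaves a η) r ↔ η 0 = true) :
    IsSpecialTree G (glueNodes r b) (glueLeaves a) := by
  intro η m
  cases m using Fin.cases with
  | zero => exact hr η
  | succ m => exact h (η 0) (Fin.tail η) m

end SpecialTree

section Majority

variable {V : Type*} {G : SimpleGraph V} {ε : ℝ} {B : Finset V}

theorem card_filter_adj_ne_maj1_lt (hB : Good G ε B) (x : V) :
    ((B.filter fun b => ¬ (G.Adj x b ↔ Maj1 G ε x B)).card : ℝ) < ε * B.card := by
  by_cases hx : Maj1 G ε x B
  · simp only [hx, iff_true]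
    exact hx
  · simp only [hx, iff_false, not_not]
    simpa only [G.adj_comm] using (hB x).resolve_right hx

theorem exists_adj_iff_maj1 {ι : Type*} [Fintype ι] [Nonempty ι] (hB : Good G ε B)
    (hι : Fintype.card ι * ε ≤ 1) (x : ι → V) :
    ∃ r ∈ B, ∀ i, G.Adj (x i) r ↔ Maj1 G ε (x i) B := by
  set bad := fun i => B.filter fun b => ¬ (G.Adj (x i) b ↔ Maj1 G ε (x i) B)
  have hcard : (univ.biUnion bad).card < B.card := by
    have := calc ((univ.biUnion bad).card : ℝ)
        ≤ ∑ i, ((bad i).card : ℝ) := mod_cast card_biUnion_le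
      _ < ∑ _i : ι, ε * B.card := sum_lt_sum_of_nonempty univ_nonempty
          fun i _ => card_filter_adj_ne_maj1_lt hB (x i)
      _ = Fintype.card ι * ε * B.card := by simp [mul_assoc]
      _ ≤ B.card := by nlinarith [(B.card.cast_nonneg : (0 : ℝ) ≤ B.card)]
    exact_mod_cast this
  obtain ⟨r, hrB, hr⟩ := exists_mem_notMem_of_card_lt_card hcard
  refine ⟨r, hrB, fun i => ?_⟩
  by_contra hri
  exact hr (mem_biUnion.2 ⟨i, mem_univ i, mem_filter.2 ⟨hrB, hri⟩⟩)

end Majority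

theorem exists_isSpecialTree_of_forall_not_excellent {V : Type*} {G : SimpleGraph V} {ε : ℝ}
    (hε0 : 0 ≤ ε) (n : ℕ) (hε : ε < 1 / 2 ^ n) (C : Finset V) (hC : 1 ≤ ε ^ n * C.card)
    (hsplit : ∀ D ⊆ C, ε ^ n * C.card ≤ ε * D.card → ¬ Excellent G ε D) :
    ∃ b a, IsSpecialTree G (n := n) b a ∧ ∀ η, a η ∈ C := by
  induction n generalizing C with
  | zero =>
    obtain ⟨x, hx⟩ : C.Nonempty := card_pos.1 (by simpa using hC)
    exact ⟨fun m => m.elim0, fun _ => x, fun _ m => m.elim0, fun _ => hx⟩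
  | succ n ih =>
    have hε2 : 2 ^ (n + 1) * ε < 1 := by rwa [lt_div_iff₀' (by positivity)] at hε
    have hε1 : ε ≤ 1 := by nlinarith [one_le_pow₀ (M₀ := ℝ) (n := n + 1) one_le_two]
    have hεn : ε ^ n ≤ 1 := pow_le_one₀ hε0 hε1
    have hεC : ε ^ (n + 1) * C.card = ε ^ n * (ε * C.card) := by ring
    have hnotexc : ¬ Excellent G ε C := hsplit C Subset.rfl <| by
      rw [hεC]; exact mul_le_of_le_one_left (by positivity) hεn
    simp only [Excellent, not_forall, not_or, not_lt] at hnotexc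
    obtain ⟨B, -, hB, hC₁, hC₀⟩ := hnotexc
    set part : Bool → Finset V := fun ℓ => C.filter fun x => Maj1 G ε x B ↔ ℓ = true
    have hpart : ∀ ℓ, ε * C.card ≤ (part ℓ).card := by
      rintro (_ | _) <;> simpa [part]
    have hsub : ∀ ℓ, part ℓ ⊆ C := fun ℓ => filter_subset _ _
    have hsize : ∀ ℓ, ε ^ (n + 1) * C.card ≤ ε ^ n * (part ℓ).card := fun ℓ => by
      rw [hεC]; exact mul_le_mul_of_nonneg_left (hpart ℓ) (by positivity)
    have hsubtree : ∀ ℓ, ∃ b a, IsSpecialTree G (n := n) b a ∧ ∀ η, a η ∈ part ℓ := fun ℓ =>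
      ih (hε.trans_le (by gcongr <;> simp)) (part ℓ) (hC.trans (hsize ℓ))
        fun D hD hDsize => hsplit D (hD.trans (hsub ℓ)) ((hsize ℓ).trans hDsize)
    choose b a hab haC using hsubtree
    obtain ⟨r, -, hr⟩ := exists_adj_iff_maj1 (ι := Fin (n + 1) → Bool) hB
      (by simpa using hε2.le) (glueLeaves a)
    refine ⟨glueNodes r b, glueLeaves a, IsSpecialTree.glue hab fun η => (hr η).trans ?_,
      fun η => hsub _ (haC _ _)⟩
    exact (mem_filter.1 (haC (η 0) (Fin.tail η))).2

theorem exists_excellent_subset_general {V : Type*} (G : SimpleGraph V) (t : ℕ)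
    (hG : ¬ SpecialTree G t) (ε : ℝ) (hε0 : 0 < ε) (hε : ε < 1 / 2 ^ t)
    (A : Finset V) (hA : 1 / ε ^ t ≤ (A.card : ℝ)) :
    ∃ A' ⊆ A, Excellent G ε A' ∧ ε ^ (t - 1) * A.card ≤ (A'.card : ℝ) := by
  by_contra! hsmall
  have hε1 : ε ≤ 1 := hε.le.trans (div_le_one_of_le₀ (one_le_pow₀ one_le_two) (by positivity))
  have hεt : ε * ε ^ (t - 1) ≤ ε ^ t := by
    rcases t with _ | t
    · simpa using hε1
    · rw [Nat.add_sub_cancel, pow_succ']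
  have hAt : 1 ≤ ε ^ t * A.card := by rwa [div_le_iff₀ (by positivity), mul_comm] at hA
  obtain ⟨b, a, hab, -⟩ := exists_isSpecialTree_of_forall_not_excellent hε0.le t hε A hAt
    fun D hDA hDsize hD => (hsmall D hDA hD).not_ge <| le_of_mul_le_mul_left (by
      calc ε * (ε ^ (t - 1) * A.card) = ε * ε ^ (t - 1) * A.card := by ring
        _ ≤ ε ^ t * A.card := by gcongr
        _ ≤ ε * D.card := hDsize) hε0
  exact hG ⟨b, a, hab⟩

/-- Claim 1: existence of large ε-excellent subsets. -/
theorem exists_excellent_subset {V : Type*} [Fintype V] (G : SimpleGraph V) (t : ℕ)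
    (hG : ¬ SpecialTree G t) (ε : ℝ) (hε0 : 0 < ε) (hε : ε < 1 / 2 ^ t)
    (A : Finset V) (hA : 1 / ε ^ t ≤ (A.card : ℝ)) :
    ∃ A' ⊆ A, Excellent G ε A' ∧ ε ^ (t - 1) * A.card ≤ (A'.card : ℝ) :=
  exists_excellent_subset_general G t hG ε hε0 hε A hA
end

section
/- Let G be a finite graph with no full special tree of height t, let 0 < ε < 1/2^t, and let s_0, …, s_{t−1} be a size sequence for ε (i.e., ε·s_ℓ ≥ s_{ℓ+1} for ℓ < t−1, s_{t−1} divides every s_ℓ, and s_{t−1} > t). Then every subset A of G with |A| ≥ max{s_0, 1/ε^t} contains an ε-excellent subset A′ with |A′| = s_ℓ for some ℓ < t. -/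
/-!
Suppose no subset of `A` of a size `s ℓ` is `ε`-excellent. A non-excellent `C` comes with a
nonempty `ε`-good `B` such that both majority sides of `C` toward `B` have size `≥ ε|C|`;
splitting `t` times, starting from a subset of `A` of size `s 0`, gives a binary tree of
depth `t` with nonempty leaves. Going back up, every leaf below a node disagrees with its
majority value toward the node's `B` on fewer than `ε|B|` vertices of `B` (this is where
goodness of `B` enters), and there are at most `2^t` leaves with `2^t ε < 1`, so some vertex
of `B` is adjacent to exactly the leaves on the `1`-side. These vertices form a full special
tree of height `t`.
-/

open scoped Classical
open Finset

section

variable {V : Type*} (G : SimpleGraph V) {ε : ℝ}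

theorem card_filter_not_adj_iff_lt_of_good {B : Finset V} (hB : Good G ε B) {a : V} {c : Prop}
    (ha : Maj1 G ε a B ↔ c) : ((B.filter fun b => ¬ (G.Adj a b ↔ c)).card : ℝ) < ε * B.card := by
  by_cases hc : c
  · simpa [Maj1, hc] using ha.mpr hc
  · simpa [hc] using (hB a).resolve_right fun h => hc (ha.mp h)

theorem exists_mem_forall_adj_iff_of_good {ι : Type*} [Fintype ι] {B : Finset V}
    (hBne : B.Nonempty) (hB : Good G ε B) (hι : Fintype.card ι * ε ≤ 1) (a : ι → V)
    (c : ι → Prop) (ha : ∀ i, Maj1 G ε (a i) B ↔ c i) :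
    ∃ b ∈ B, ∀ i, G.Adj (a i) b ↔ c i := by
  rcases isEmpty_or_nonempty ι with _ | _
  · exact ⟨hBne.choose, hBne.choose_spec, isEmptyElim⟩
  set bad : ι → Finset V := fun i => B.filter fun b => ¬ (G.Adj (a i) b ↔ c i)
  suffices ¬ B ⊆ univ.biUnion bad by
    obtain ⟨b, hb, hbad⟩ := not_subset.mp this
    refine ⟨b, hb, fun i => ?_⟩
    by_contra h
    exact hbad (mem_biUnion.mpr ⟨i, mem_univ _, mem_filter.mpr ⟨hb, h⟩⟩)
  intro hcover
  have hBpos : (0 : ℝ) < B.card := by exact_mod_cast hBne.card_pos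
  have : (B.card : ℝ) < B.card := calc
    (B.card : ℝ) ≤ (univ.biUnion bad).card := by exact_mod_cast card_le_card hcover
    _ ≤ ∑ i, ((bad i).card : ℝ) := by exact_mod_cast card_biUnion_le
    _ < ∑ _i : ι, ε * B.card :=
      sum_lt_sum_of_nonempty univ_nonempty fun i _ => card_filter_not_adj_iff_lt_of_good G hB (ha i)
    _ = (Fintype.card ι * ε) * B.card := by rw [sum_const, card_univ, nsmul_eq_mul, mul_assoc]
    _ ≤ B.card := mul_le_of_le_one_left hBpos.le hι
  exact lt_irrefl _ this

def SpecialTreeIn_s8 (n : ℕ) (C : Finset V) : Prop :=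
  ∃ (b : (m : Fin n) → (Fin m → Bool) → V) (a : (Fin n → Bool) → V), (∀ η, a η ∈ C) ∧
    ∀ (η : Fin n → Bool) (m : Fin n),
      G.Adj (a η) (b m fun i => η (Fin.castLE m.isLt.le i)) ↔ η m = true

theorem specialTreeIn_zero {C : Finset V} (hC : C.Nonempty) : SpecialTreeIn_s8 G 0 C :=
  ⟨fun m => m.elim0, fun _ => hC.choose, fun _ => hC.choose_spec, fun _ m => m.elim0⟩

namespace SpecialTreeIn_s8

variable {G} {n : ℕ} {C D : Finset V}

theorem specialTree (h : SpecialTreeIn_s8 G n C) : SpecialTree G n :=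
  let ⟨b, a, _, hab⟩ := h
  ⟨b, a, hab⟩

theorem mono_s8 (h : SpecialTreeIn_s8 G n C) (hCD : C ⊆ D) : SpecialTreeIn_s8 G n D :=
  let ⟨b, a, ha, hab⟩ := h
  ⟨b, a, fun η => hCD (ha η), hab⟩

/-- Two trees whose leaves lie on opposite majority sides toward a good `B` hang below a common
root in `B`. -/
theorem join {B : Finset V} (hBne : B.Nonempty) (hB : Good G ε B) (hε : 2 ^ (n + 1) * ε ≤ 1)
    {C : Bool → Finset V} (hCD : ∀ i, C i ⊆ D) (hC : ∀ i, ∀ a ∈ C i, Maj1 G ε a B ↔ i = true)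
    (hT : ∀ i, SpecialTreeIn_s8 G n (C i)) : SpecialTreeIn_s8 G (n + 1) D := by
  choose b a ha hab using hT
  obtain ⟨r, -, hr⟩ := exists_mem_forall_adj_iff_of_good G hBne hB (by simpa using hε)
    (fun η : Fin (n + 1) → Bool => a (η 0) (Fin.tail η)) (fun η => η 0 = true)
    fun η => hC _ _ (ha _ _)
  refine ⟨fun m => Fin.cases (fun _ => r)
      (fun k (ρ : Fin (k + 1) → Bool) => b (ρ 0) k (Fin.tail ρ)) m,
    fun η => a (η 0) (Fin.tail η), fun η => hCD _ (ha _ _), fun η m => ?_⟩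
  cases m using Fin.cases with
  | zero => exact hr η
  | succ k => exact hab (η 0) (Fin.tail η) k

theorem of_not_excellent (hC : ¬ Excellent G ε C) (hε : 2 ^ (n + 1) * ε ≤ 1)
    (hsub : ∀ C' ⊆ C, ε * C.card ≤ C'.card → SpecialTreeIn_s8 G n C') :
    SpecialTreeIn_s8 G (n + 1) C := by
  simp only [Excellent, not_forall, not_or, not_lt] at hC
  obtain ⟨B, hBne, hB, h1, h0⟩ := hC
  refine join hBne hB hε (C := fun i => C.filter fun a => Maj1 G ε a B ↔ i = true)
    (fun _ => filter_subset _ _) (fun _ _ ha => (mem_filter.mp ha).2)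
    fun i => hsub _ (filter_subset _ _) ?_
  cases i <;> simpa

end SpecialTreeIn_s8

theorem specialTreeIn_of_forall_excellent_card_ne {A : Finset V} {t : ℕ} {s : ℕ → ℕ}
    (hε0 : 0 < ε) (hε : 2 ^ t * ε ≤ 1) (hs : ∀ ℓ, ℓ < t - 1 → (s (ℓ + 1) : ℝ) ≤ ε * s ℓ)
    (hs_pos : 0 < s (t - 1)) (hA : ∀ C ⊆ A, Excellent G ε C → ∀ ℓ < t, C.card ≠ s ℓ) :
    ∀ n ≤ t, ∀ C ⊆ A, (if n = 0 then 1 else s (t - n)) ≤ C.card → SpecialTreeIn_s8 G n C := by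
  intro n
  induction n with
  | zero => exact fun _ C _ hC => specialTreeIn_zero G (card_pos.mp hC)
  | succ n ih =>
    intro hn C hCA hC
    obtain ⟨C', hC'C, hC'⟩ := exists_subset_card_eq (s := C) (n := s (t - (n + 1))) hC
    have hε' : 2 ^ (n + 1) * ε ≤ 1 :=
      (mul_le_mul_of_nonneg_right (pow_le_pow_right₀ one_le_two hn) hε0.le).trans hε
    refine (SpecialTreeIn_s8.of_not_excellent (fun hex => hA C' (hC'C.trans hCA) hex _ (by omega) hC')
      hε' fun D hD hDcard => ih (by omega) D (hD.trans (hC'C.trans hCA)) ?_).mono_s8 hC'C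
    rw [hC'] at hDcard
    rcases n with _ | k
    · have : (0 : ℝ) < D.card := (mul_pos hε0 (by exact_mod_cast hs_pos)).trans_le hDcard
      simpa using this
    · have hsk := hs (t - (k + 2)) (by omega)
      rw [show t - (k + 2) + 1 = t - (k + 1) by omega] at hsk
      simpa using (show (s (t - (k + 1)) : ℝ) ≤ D.card from hsk.trans hDcard)

end

theorem exists_excellent_subset_of_prescribed_size_general {V : Type*}
    (G : SimpleGraph V) (t : ℕ) (hG : ¬ SpecialTree G t)
    (ε : ℝ) (hε0 : 0 < ε) (hε : ε < 1 / 2 ^ t)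
    (s : ℕ → ℕ)
    (hs1 : ∀ ℓ, ℓ < t - 1 → (s (ℓ + 1) : ℝ) ≤ ε * s ℓ)
    (hs3 : t < s (t - 1))
    (A : Finset V) (hA : max ((s 0 : ℝ)) (1 / ε ^ t) ≤ (A.card : ℝ)) :
    ∃ A' ⊆ A, Excellent G ε A' ∧ ∃ ℓ < t, A'.card = s ℓ := by
  by_contra! hcon
  have h2ε : 2 ^ t * ε ≤ 1 := by
    rw [lt_div_iff₀ (by positivity)] at hε
    linarith
  refine hG (specialTreeIn_of_forall_excellent_card_ne G hε0 h2ε hs1 (by omega) hcon t le_rfl A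
    subset_rfl ?_).specialTree
  rcases t with _ | t
  · simpa using (le_max_right _ _).trans hA
  · simpa using (le_max_left _ _).trans hA

/-- Claim 2: existence of an ε-excellent subset whose size is a member
of a prescribed size sequence. -/
theorem exists_excellent_subset_of_prescribed_size {V : Type*} [Fintype V]
    (G : SimpleGraph V) (t : ℕ) (ht : 1 ≤ t) (hG : ¬ SpecialTree G t)
    (ε : ℝ) (hε0 : 0 < ε) (hε : ε < 1 / 2 ^ t)
    (s : ℕ → ℕ)
    (hs1 : ∀ ℓ, ℓ < t - 1 → (s (ℓ + 1) : ℝ) ≤ ε * s ℓ)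
    (hs2 : ∀ ℓ < t, s (t - 1) ∣ s ℓ)
    (hs3 : t < s (t - 1))
    (A : Finset V) (hA : max ((s 0 : ℝ)) (1 / ε ^ t) ≤ (A.card : ℝ)) :
    ∃ A' ⊆ A, Excellent G ε A' ∧ ∃ ℓ < t, A'.card = s ℓ :=
  exists_excellent_subset_of_prescribed_size_general G t hG ε hε0 hε s hs1 hs3 A hA
end

section
/- If A and B are ε-excellent subsets of a graph G with 0 < ε < 1/2, then the pair (A,B) is ε-uniform: there is a truth value t ∈ {0,1} such that for all but fewer than ε|A| elements a of A, for all but fewer than ε|B| elements b of B, R(a,b) holds iff t = 1. -/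
open scoped Classical
open Finset

/- Testing excellence of `B` against the singletons `{b}`, whose majority value is adjacency to
`b`, shows that `B` is good. Excellence of `A` against `B` then yields the majority value `t`;
for `t = 0` goodness of `B` is needed to turn "the majority value of `a` is not `1`" into
"`a` has fewer than `ε|B|` neighbours in `B`". -/

section

variable {V : Type*} {G : SimpleGraph V} {ε : ℝ}

lemma good_singleton (hε0 : 0 < ε) (b : V) : Good G ε {b} := by
  intro c
  by_cases h : G.Adj c b
  · right; simp [filter_singleton, h, hε0]
  · left; simp [filter_singleton, h, hε0]

lemma maj1_singleton_iff (hε0 : 0 < ε) (hε1 : ε ≤ 1) (a b : V) :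
    Maj1 G ε a {b} ↔ G.Adj a b := by
  by_cases h : G.Adj a b
  · simp [Maj1, filter_singleton, h, hε0]
  · simp [Maj1, filter_singleton, h, hε1]

lemma Excellent.good {A : Finset V} (hA : Excellent G ε A) (hε0 : 0 < ε) (hε1 : ε ≤ 1) :
    Good G ε A := by
  intro b
  simpa only [maj1_singleton_iff hε0 hε1, G.adj_comm] using
    hA {b} (singleton_nonempty b) (good_singleton hε0 b)

lemma uniform_true_iff {A B : Finset V} :
    Uniform G ε A B true ↔ ((A.filter fun a => ¬ Maj1 G ε a B).card : ℝ) < ε * A.card := by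
  simp [Uniform, Maj1]

lemma Good.uniform_false {A B : Finset V} (hB : Good G ε B)
    (h : ((A.filter fun a => Maj1 G ε a B).card : ℝ) < ε * A.card) :
    Uniform G ε A B false := by
  have hsub : (A.filter fun a =>
      ¬ (((B.filter fun b => ¬ (G.Adj a b ↔ false = true)).card : ℝ) < ε * B.card)) ⊆
      A.filter fun a => Maj1 G ε a B := by
    intro a ha
    simp only [mem_filter, Bool.false_eq_true, iff_false, not_not] at ha ⊢
    exact ⟨ha.1, (hB a).resolve_left ha.2⟩
  exact lt_of_le_of_lt (by exact_mod_cast card_le_card hsub) h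

end

theorem excellent_pair_uniform_general {V : Type*} (G : SimpleGraph V) (ε : ℝ) (A B : Finset V)
    (hB0 : B.Nonempty)
    (hA : Excellent G ε A) (hB : Excellent G ε B)
    (hε0 : 0 < ε) (hε : ε < 1/2) :
    ∃ t : Bool, Uniform G ε A B t := by
  have hBgood : Good G ε B := hB.good hε0 (by linarith)
  rcases hA B hB0 hBgood with h | h
  · exact ⟨false, hBgood.uniform_false h⟩
  · exact ⟨true, uniform_true_iff.mpr h⟩

/-- a pair of ε-excellent sets is ε-uniform (0 < ε < 1/2). -/
theorem excellent_pair_uniform {V : Type*} (G : SimpleGraph V) (ε : ℝ) (A B : Finset V)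
    (hA0 : A.Nonempty) (hB0 : B.Nonempty)
    (hA : Excellent G ε A) (hB : Excellent G ε B)
    (hε0 : 0 < ε) (hε : ε < 1/2) :
    ∃ t : Bool, Uniform G ε A B t :=
  excellent_pair_uniform_general G ε A B hB0 hA hB hε0 hε
end

section
/- If G is a k-edge stable graph, then for any finite subset A of vertices, the number of distinct neighborhood traces on A, i.e. |{ {a ∈ A : R(a,b)} : b a vertex of G }|, is at most Σ_{i≤k} C(|A|, i), and in particular at most |A|^k + 1. -/
open scoped Classical
open Finset

/-!
By Pajor's form of the Sauer–Shelah lemma the number of traces on `A` is at most the number of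
subsets of `A` shattered by the traces, so it suffices that no set `S` of size `k + 1` is
shattered. Given such an `S`, pick `u ∈ S` with the fewest neighbours in `S` and put
`E = S \ {u}`. Call `C ⊆ E` split if both `C` and `C ∪ {u}` are traces on `S` of vertices of `E`.
Each such `C ∪ {u}` is the trace of a neighbour of `u`, so there are at most `deg_S u` split sets,
while each has at least `deg_S u` elements; hence `E` can be enumerated as `a₀, …, a_{k-1}` with
no initial segment `{aᵢ | i < j}` split. For each `j`, one of `{aᵢ | i < j}` and
`{aᵢ | i < j} ∪ {u}` is the trace of no vertex of `E`, yet of some vertex `b_j` since `S` is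
shattered; then `aᵢ ~ b_j ↔ i < j` and `b_j ∉ E`, a half-graph of length `k`.
-/

theorem Nat.sum_range_choose_le_pow_add_one (n : ℕ) :
    ∀ k, ∑ i ∈ range (k + 1), n.choose i ≤ n ^ k + 1
  | 0 => by simp
  | 1 => by simp [sum_range_succ, add_comm]
  | k + 2 => by
    have ih : ∑ i ∈ range (k + 2), n.choose i ≤ n ^ (k + 1) + 1 :=
      Nat.sum_range_choose_le_pow_add_one n (k + 1)
    have hstep : n.choose (k + 2) ≤ n ^ (k + 1) * (n - 1) := calc
      n.choose (k + 2) ≤ n.choose (k + 2) * (k + 2) := Nat.le_mul_of_pos_right _ (by omega)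
      _ = n.choose (k + 1) * (n - (k + 1)) := Nat.choose_succ_right_eq n (k + 1)
      _ ≤ n ^ (k + 1) * (n - 1) := Nat.mul_le_mul (Nat.choose_le_pow n _) (by omega)
    have hpow : n ^ (k + 1) * (n - 1) + n ^ (k + 1) = n ^ (k + 2) := by
      rcases n with _ | n <;> simp [pow_succ]; ring
    rw [sum_range_succ]
    omega

namespace Finset

variable {α : Type*}

theorem card_le_sum_range_choose_of_shatters {𝒜 : Finset (Finset α)} {A : Finset α} {d : ℕ}
    (h𝒜 : ∀ t ∈ 𝒜, t ⊆ A) (hd : ∀ s, 𝒜.Shatters s → #s ≤ d) :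
    #𝒜 ≤ ∑ i ∈ range (d + 1), (#A).choose i := by
  simp_rw [← card_powersetCard]
  refine (card_le_card_shatterer 𝒜).trans <|
    (card_le_card fun s hs ↦ mem_biUnion.2 ⟨#s, ?_⟩).trans card_biUnion_le
  obtain ⟨t, ht, hst⟩ := (mem_shatterer.1 hs).exists_superset
  exact ⟨mem_range.2 (Nat.lt_succ_of_le (hd s (mem_shatterer.1 hs))),
    mem_powersetCard.2 ⟨hst.trans (h𝒜 t ht), rfl⟩⟩

theorem exists_injective_forall_image_Iio_notMem {D : Finset (Finset α)}
    (hD : ∀ C ∈ D, #D ≤ #C) :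
    ∀ (n : ℕ) (X : Finset α), #X = n → ∃ a : Fin n → α,
      Function.Injective a ∧ (∀ i, a i ∈ X) ∧ ∀ j, (Iio j).image a ∉ D
  | 0, _, _ => ⟨Fin.elim0, Function.injective_of_subsingleton _, fun i ↦ i.elim0, fun j ↦ j.elim0⟩
  | n + 1, X, hX => by
    -- otherwise the `#X` distinct sets `X.erase y` lie in `D`, which has at most `#X - 1` members
    obtain ⟨y, hyX, hyD⟩ : ∃ y ∈ X, X.erase y ∉ D := by
      by_contra! hall
      obtain ⟨y, hy⟩ : X.Nonempty := card_pos.1 (by omega)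
      have hle : #X ≤ #D := by
        rw [← card_image_of_injOn X.erase_injOn]
        exact card_le_card fun C hC ↦ by
          obtain ⟨z, hz, rfl⟩ := mem_image.1 hC
          exact hall z hz
      have := hD _ (hall y hy)
      rw [card_erase_of_mem hy] at this
      omega
    obtain ⟨a, ha, haX, haD⟩ :=
      exists_injective_forall_image_Iio_notMem hD n (X.erase y) (by simp [hyX, hX])
    have hrange : univ.image a = X.erase y :=
      eq_of_subset_of_card_le (fun x hx ↦ by obtain ⟨i, -, rfl⟩ := mem_image.1 hx; exact haX i)
        (by rw [card_image_of_injective _ ha, card_erase_of_mem hyX, hX]; simp)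
    refine ⟨Fin.snoc a y, Fin.snoc_injective_of_injective ha ?_, Fin.lastCases ?_ ?_,
      Fin.lastCases ?_ ?_⟩
    · rintro ⟨i, hi⟩
      exact (mem_erase.1 (hi ▸ haX i)).1 rfl
    · simpa using hyX
    · simpa using fun i ↦ mem_of_mem_erase (haX i)
    · rwa [Fin.Iio_last_eq_map, map_eq_image, image_image, Fin.coe_castSuccEmb,
        Fin.snoc_comp_castSucc, hrange]
    · intro j
      rw [← Fin.map_castSuccEmb_Iio, map_eq_image, image_image, Fin.coe_castSuccEmb,
        Fin.snoc_comp_castSucc]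
      exact haD j

end Finset

namespace SimpleGraph

variable {V : Type*} (G : SimpleGraph V)

noncomputable def trace (S : Finset V) (b : V) : Finset V := S.filter (G.Adj · b)

noncomputable def splitTraces (S : Finset V) (u : V) : Finset (Finset V) :=
  ((S.erase u).image (G.trace S)).filter fun C ↦
    u ∉ C ∧ insert u C ∈ (S.erase u).image (G.trace S)

variable {G}

@[simp]
theorem mem_trace {S : Finset V} {b x : V} : x ∈ G.trace S b ↔ x ∈ S ∧ G.Adj x b :=
  mem_filter

theorem injective_sumElim_of_adj_iff_lt {ι : Type*} [LinearOrder ι] {a b : ι → V}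
    (hab : ∀ i j, G.Adj (a i) (b j) ↔ i < j) (hne : ∀ i j, a i ≠ b j) :
    Function.Injective (Sum.elim a b) := by
  refine .sumElim (fun i i' h ↦ le_antisymm ?_ ?_) (fun j j' h ↦ le_antisymm ?_ ?_) hne
  · exact not_lt.1 fun hlt ↦ lt_irrefl i ((hab i i).1 (h ▸ (hab i' i).2 hlt))
  · exact not_lt.1 fun hlt ↦ lt_irrefl i' ((hab i' i').1 (h ▸ (hab i i').2 hlt))
  · exact not_lt.1 fun hlt ↦ lt_irrefl j' ((hab j' j').1 (h ▸ (hab j' j).2 hlt))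
  · exact not_lt.1 fun hlt ↦ lt_irrefl j ((hab j j).1 (h ▸ (hab j j').2 hlt))

theorem card_splitTraces_le {S C : Finset V} {u : V}
    (hu : ∀ x ∈ S, #(G.trace S u) ≤ #(G.trace S x)) (hC : C ∈ G.splitTraces S u) :
    #(G.splitTraces S u) ≤ #C := by
  have hinj : Set.InjOn (insert u) (G.splitTraces S u : Set (Finset V)) := fun C hC C' hC' h ↦ by
    rw [← erase_insert (mem_filter.1 hC).2.1, h, erase_insert (mem_filter.1 hC').2.1]
  have himage : (G.splitTraces S u).image (insert u) ⊆ (G.trace S u).image (G.trace S) := by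
    intro T hT
    obtain ⟨C, hC, rfl⟩ := mem_image.1 hT
    obtain ⟨x, hx, hxC⟩ := mem_image.1 (mem_filter.1 hC).2.2
    have hux : G.Adj u x := (mem_trace.1 (hxC ▸ mem_insert_self u C)).2
    exact hxC ▸ mem_image_of_mem _ (mem_trace.2 ⟨mem_of_mem_erase hx, hux.symm⟩)
  obtain ⟨x, hx, rfl⟩ := mem_image.1 (mem_filter.1 hC).1
  calc #(G.splitTraces S u) = #((G.splitTraces S u).image (insert u)) :=
        (card_image_of_injOn hinj).symm
    _ ≤ #((G.trace S u).image (G.trace S)) := card_le_card himage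
    _ ≤ #(G.trace S u) := card_image_le
    _ ≤ #(G.trace S x) := hu x (mem_of_mem_erase hx)

theorem exists_notMem_forall_adj_iff_mem {S P : Finset V} {u : V} (huS : u ∈ S)
    (hS : ∀ T ⊆ S, ∃ b, G.trace S b = T) (hP : P ⊆ S.erase u) (hPD : P ∉ G.splitTraces S u) :
    ∃ b ∉ S.erase u, ∀ x ∈ S.erase u, G.Adj x b ↔ x ∈ P := by
  have huP : u ∉ P := fun h ↦ (mem_erase.1 (hP h)).1 rfl
  obtain ⟨T, hTS, hTE, hTP⟩ : ∃ T ⊆ S, T ∉ (S.erase u).image (G.trace S) ∧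
      ∀ x ∈ S.erase u, x ∈ T ↔ x ∈ P := by
    by_cases hPE : P ∈ (S.erase u).image (G.trace S)
    · refine ⟨insert u P, insert_subset huS (hP.trans (erase_subset u S)),
        fun h ↦ hPD (mem_filter.2 ⟨hPE, huP, h⟩), fun x hx ↦ ?_⟩
      rw [mem_insert, or_iff_right (ne_of_mem_erase hx)]
    · exact ⟨P, hP.trans (erase_subset u S), hPE, fun _ _ ↦ Iff.rfl⟩
  obtain ⟨b, rfl⟩ := hS T hTS
  refine ⟨b, fun hb ↦ hTE (mem_image_of_mem _ hb), fun x hx ↦ ?_⟩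
  rw [← hTP x hx, mem_trace, and_iff_right (mem_of_mem_erase hx)]

theorem exists_halfGraph_of_forall_trace_eq {S : Finset V} {k : ℕ} (hcard : #S = k + 1)
    (hS : ∀ T ⊆ S, ∃ b, G.trace S b = T) :
    ∃ a b : Fin k → V, Function.Injective (Sum.elim a b) ∧ ∀ i j, G.Adj (a i) (b j) ↔ i < j := by
  obtain ⟨u, huS, hu⟩ := S.exists_min_image (fun x ↦ #(G.trace S x)) (card_pos.1 (by omega))
  obtain ⟨a, ha, haE, haD⟩ := exists_injective_forall_image_Iio_notMem
    (fun _ ↦ card_splitTraces_le hu) k (S.erase u) (by rw [card_erase_of_mem huS, hcard]; rfl)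
  choose b hbE hb using fun j ↦
    exists_notMem_forall_adj_iff_mem huS hS (fun x hx ↦ by
      obtain ⟨i, -, rfl⟩ := mem_image.1 hx; exact haE i) (haD j)
  have hab : ∀ i j, G.Adj (a i) (b j) ↔ i < j := fun i j ↦ by
    rw [hb j _ (haE i), ha.mem_finset_image, mem_Iio]
  exact ⟨a, b, injective_sumElim_of_adj_iff_lt hab fun i j h ↦ hbE j (h ▸ haE i), hab⟩

theorem exists_trace_eq_of_shatters [Fintype V] {A S : Finset V}
    (hS : (univ.image (G.trace A)).Shatters S) : ∀ T ⊆ S, ∃ b, G.trace S b = T := by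
  obtain ⟨_, hA, hSA⟩ := hS.exists_superset
  obtain ⟨_, -, rfl⟩ := mem_image.1 hA
  intro T hT
  obtain ⟨t, ht, rfl⟩ := hS hT
  obtain ⟨b, -, rfl⟩ := mem_image.1 ht
  refine ⟨b, ext fun x ↦ ?_⟩
  have := @hSA x
  simp only [mem_inter, mem_trace] at this ⊢
  tauto

end SimpleGraph

theorem EdgeStable.card_le_of_shatters {V : Type*} [Fintype V] {G : SimpleGraph V} {k : ℕ}
    (h : EdgeStable G k) {A s : Finset V} (hs : (univ.image (G.trace A)).Shatters s) : #s ≤ k := by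
  by_contra! hlt
  obtain ⟨S, hSs, hcard⟩ := exists_subset_card_eq hlt
  exact h (G.exists_halfGraph_of_forall_trace_eq hcard
    (SimpleGraph.exists_trace_eq_of_shatters (hs.mono_right hSs)))

/-- Sauer–Shelah instance: a k-edge stable graph has few neighborhood
traces on any finite vertex set. -/
theorem trace_bound {V : Type*} [Fintype V] (G : SimpleGraph V) (k : ℕ)
    (h : EdgeStable G k) (A : Finset V) :
    ((Finset.univ.image fun b : V => A.filter fun a => G.Adj a b).card
        ≤ ∑ i ∈ Finset.range (k + 1), (A.card).choose i) ∧
    ((Finset.univ.image fun b : V => A.filter fun a => G.Adj a b).card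
        ≤ A.card ^ k + 1) := by
  have hbound : #(univ.image (G.trace A)) ≤ ∑ i ∈ range (k + 1), (#A).choose i :=
    card_le_sum_range_choose_of_shatters
      (fun t ht ↦ by obtain ⟨b, -, rfl⟩ := mem_image.1 ht; exact filter_subset _ _)
      fun _ ↦ h.card_le_of_shatters
  exact ⟨hbound, hbound.trans (Nat.sum_range_choose_le_pow_add_one _ _)⟩
end
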